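/- arXiv:2505.15382 — 6 statements merged into one kernel-verified Lean document; each statement's English description precedes it below -/
import Mathlib

section
/- Under assumptions (1)–(4) and assumption (5b) — there exists t_ρ ∈ [0,1] with F_low(t_ρ) > 0 — if λ_ρ ∈ ℝ and u_ρ ∈ C([0,1]) with ‖u_ρ‖_∞ = ρ satisfy u_ρ(t) = λ_ρ ∫₀¹ k(t,s) f(s, u_ρ(s), H[u_ρ]) ds for all t ∈ [0,1], then |λ_ρ| ≤ ρ / F_low(t_ρ). -/
/-!
Evaluate the eigenvalue equation at `tρ`. Since `‖u‖ = ρ`, the values of `u` lie in `[-ρ, ρ]` and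
`H u` lies in `[Hlo, Hup]`, so the integrand is bounded below by `k tρ s * flo s`; hence
`ρ ≥ |u tρ| = |λ| · |∫ k tρ s f(…) ds| ≥ |λ| · F_low(tρ)`.
-/

open MeasureTheory Set

theorem ContinuousMap.apply_mem_Icc_of_norm_le {X : Type*} [TopologicalSpace X] [CompactSpace X]
    {u : C(X, ℝ)} {ρ : ℝ} (hu : ‖u‖ ≤ ρ) (x : X) : u x ∈ Icc (-ρ) ρ :=
  abs_le.mp ((u.norm_coe_le_norm x).trans hu)

theorem abs_le_div_of_abs_mul_le {lam I F ρ : ℝ} (hF : 0 < F) (hFI : F ≤ I)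
    (h : |lam * I| ≤ ρ) : |lam| ≤ ρ / F := by
  rw [le_div_iff₀ hF]
  calc |lam| * F ≤ |lam| * |I| := by gcongr; exact hFI.trans (le_abs_self I)
    _ = |lam * I| := (abs_mul lam I).symm
    _ ≤ ρ := h

theorem intervalIntegral.integral_mul_le_integral_mul_of_le {w g h : ℝ → ℝ} {a b : ℝ}
    (hab : a ≤ b) (hw : ContinuousOn w (Icc a b)) (hg : ContinuousOn g (Icc a b))
    (hh : ContinuousOn h (Icc a b)) (hw_nonneg : ∀ s ∈ Icc a b, 0 ≤ w s)
    (hgh : ∀ s ∈ Icc a b, g s ≤ h s) :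
    ∫ s in a..b, w s * g s ≤ ∫ s in a..b, w s * h s := by
  rw [← uIcc_of_le hab] at hw hg hh
  exact integral_mono_on hab ((hw.mul hg).intervalIntegrable) ((hw.mul hh).intervalIntegrable)
    fun s hs => mul_le_mul_of_nonneg_left (hgh s hs) (hw_nonneg s hs)

/-- The Nemytskii operator `s ↦ f(s, u(s), v)`; `u` lives on `[0, 1]`, so its argument is clamped
by `projIcc`, as in the eigenvalue equation. -/
noncomputable def nemytskii (f : ℝ → ℝ → ℝ → ℝ) (u : C(Icc (0 : ℝ) 1, ℝ)) (v : ℝ) :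
    ℝ → ℝ :=
  fun s => f s (u (projIcc 0 1 zero_le_one s)) v

section Nemytskii

variable {f : ℝ → ℝ → ℝ → ℝ} {u : C(Icc (0 : ℝ) 1, ℝ)} {ρ v Hlo Hup : ℝ}

theorem continuousOn_nemytskii
    (hf : ContinuousOn (fun p : ℝ × ℝ × ℝ => f p.1 p.2.1 p.2.2)
      (Icc 0 1 ×ˢ Icc (-ρ) ρ ×ˢ Icc Hlo Hup))
    (hu : ‖u‖ ≤ ρ) (hv : v ∈ Icc Hlo Hup) :
    ContinuousOn (nemytskii f u v) (Icc 0 1) := by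
  have hcurve : Continuous fun s : ℝ => (s, u (projIcc 0 1 zero_le_one s), v) := by fun_prop
  exact hf.comp hcurve.continuousOn
    fun s hs => ⟨hs, ContinuousMap.apply_mem_Icc_of_norm_le hu _, hv⟩

theorem le_nemytskii {flo fup : ℝ → ℝ}
    (hf_bd : ∀ t ∈ Icc (0 : ℝ) 1, ∀ x ∈ Icc (-ρ) ρ, ∀ y ∈ Icc Hlo Hup,
      flo t ≤ f t x y ∧ f t x y ≤ fup t)
    (hu : ‖u‖ ≤ ρ) (hv : v ∈ Icc Hlo Hup) {s : ℝ} (hs : s ∈ Icc (0 : ℝ) 1) :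
    flo s ≤ nemytskii f u v s :=
  (hf_bd s hs _ (ContinuousMap.apply_mem_Icc_of_norm_le hu _) v hv).1

end Nemytskii

theorem hammerstein_eigenvalue_bound_5b_general
    (ρ : ℝ)
    (k : ℝ → ℝ → ℝ)
    (hk_cont : ContinuousOn (fun p : ℝ × ℝ => k p.1 p.2)
      (Set.Icc 0 1 ×ˢ Set.Icc 0 1))
    (hk_nonneg : ∀ t ∈ Set.Icc (0:ℝ) 1, ∀ s ∈ Set.Icc (0:ℝ) 1, 0 ≤ k t s)
    (H : C(Set.Icc (0:ℝ) 1, ℝ) → ℝ)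
    (Hlo Hup : ℝ)
    (hH_bd : ∀ u ∈ Metric.closedBall (0 : C(Set.Icc (0:ℝ) 1, ℝ)) ρ,
      Hlo ≤ H u ∧ H u ≤ Hup)
    (f : ℝ → ℝ → ℝ → ℝ)
    (hf_cont : ContinuousOn (fun p : ℝ × ℝ × ℝ => f p.1 p.2.1 p.2.2)
      (Set.Icc 0 1 ×ˢ Set.Icc (-ρ) ρ ×ˢ Set.Icc Hlo Hup))
    (flo fup : ℝ → ℝ)
    (hflo_cont : ContinuousOn flo (Set.Icc 0 1))
    (hf_bd : ∀ t ∈ Set.Icc (0:ℝ) 1, ∀ u ∈ Set.Icc (-ρ) ρ, ∀ v ∈ Set.Icc Hlo Hup,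
      flo t ≤ f t u v ∧ f t u v ≤ fup t)
    (tρ : ℝ) (htρ : tρ ∈ Set.Icc (0:ℝ) 1)
    (h5b : 0 < ∫ s in (0:ℝ)..1, k tρ s * flo s)
    (lam : ℝ) (u : C(Set.Icc (0:ℝ) 1, ℝ)) (hu : ‖u‖ = ρ)
    (heq : ∀ t : Set.Icc (0:ℝ) 1, u t =
      lam * ∫ s in (0:ℝ)..1, k t s * f s (u (Set.projIcc 0 1 zero_le_one s)) (H u)) :
    |lam| ≤ ρ / ∫ s in (0:ℝ)..1, k tρ s * flo s := by
  have hHu : H u ∈ Icc Hlo Hup := hH_bd u (mem_closedBall_zero_iff.mpr hu.le)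
  have hF_le : ∫ s in (0:ℝ)..1, k tρ s * flo s ≤
      ∫ s in (0:ℝ)..1, k tρ s * nemytskii f u (H u) s :=
    intervalIntegral.integral_mul_le_integral_mul_of_le zero_le_one
      (hk_cont.uncurry_left tρ htρ) hflo_cont (continuousOn_nemytskii hf_cont hu.le hHu)
      (hk_nonneg tρ htρ) fun s hs => le_nemytskii hf_bd hu.le hHu hs
  have hval : u ⟨tρ, htρ⟩ = lam * ∫ s in (0:ℝ)..1, k tρ s * nemytskii f u (H u) s :=
    heq ⟨tρ, htρ⟩
  refine abs_le_div_of_abs_mul_le h5b hF_le ?_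
  rw [← hval, ← hu]
  exact u.norm_coe_le_norm _

/-- Under assumptions (1)-(4) and (5b), any eigenvalue lam with eigenfunction of
sup-norm rho satisfies |lam| <= rho / F_low(t_rho). -/
theorem hammerstein_eigenvalue_bound_5b
    (ρ : ℝ) (hρ : 0 < ρ)
    (k : ℝ → ℝ → ℝ)
    (hk_cont : ContinuousOn (fun p : ℝ × ℝ => k p.1 p.2)
      (Set.Icc 0 1 ×ˢ Set.Icc 0 1))
    (hk_nonneg : ∀ t ∈ Set.Icc (0:ℝ) 1, ∀ s ∈ Set.Icc (0:ℝ) 1, 0 ≤ k t s)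
    (H : C(Set.Icc (0:ℝ) 1, ℝ) → ℝ)
    (hH_cont : ContinuousOn H (Metric.closedBall 0 ρ))
    (Hlo Hup : ℝ)
    (hH_bd : ∀ u ∈ Metric.closedBall (0 : C(Set.Icc (0:ℝ) 1, ℝ)) ρ,
      Hlo ≤ H u ∧ H u ≤ Hup)
    (f : ℝ → ℝ → ℝ → ℝ)
    (hf_cont : ContinuousOn (fun p : ℝ × ℝ × ℝ => f p.1 p.2.1 p.2.2)
      (Set.Icc 0 1 ×ˢ Set.Icc (-ρ) ρ ×ˢ Set.Icc Hlo Hup))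
    (flo fup : ℝ → ℝ)
    (hflo_cont : ContinuousOn flo (Set.Icc 0 1))
    (hfup_cont : ContinuousOn fup (Set.Icc 0 1))
    (hf_bd : ∀ t ∈ Set.Icc (0:ℝ) 1, ∀ u ∈ Set.Icc (-ρ) ρ, ∀ v ∈ Set.Icc Hlo Hup,
      flo t ≤ f t u v ∧ f t u v ≤ fup t)
    (tρ : ℝ) (htρ : tρ ∈ Set.Icc (0:ℝ) 1)
    (h5b : 0 < ∫ s in (0:ℝ)..1, k tρ s * flo s)
    (lam : ℝ) (u : C(Set.Icc (0:ℝ) 1, ℝ)) (hu : ‖u‖ = ρ)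
    (heq : ∀ t : Set.Icc (0:ℝ) 1, u t =
      lam * ∫ s in (0:ℝ)..1, k t s * f s (u (Set.projIcc 0 1 zero_le_one s)) (H u)) :
    |lam| ≤ ρ / ∫ s in (0:ℝ)..1, k tρ s * flo s :=
  hammerstein_eigenvalue_bound_5b_general ρ k hk_cont hk_nonneg H Hlo Hup hH_bd f hf_cont flo fup
    hflo_cont hf_bd tρ htρ h5b lam u hu heq
end

section
/- Under assumptions (1)–(4), if there exists t_ρ ∈ [0,1] with F_up(t_ρ) < 0, then for every u ∈ C([0,1]) with ‖u‖_∞ = ρ one has ‖Tu‖_∞ ≥ −Tu(t_ρ) ≥ −F_up(t_ρ) > 0, where Tu(t) := ∫₀¹ k(t,s) f(s, u(s), H[u]) ds; in particular inf over all such u of ‖Tu‖_∞ is strictly positive. -/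
open MeasureTheory Set

section Kernel

variable {k : ℝ → ℝ → ℝ} (hk : ContinuousOn (fun p : ℝ × ℝ => k p.1 p.2) (Icc 0 1 ×ˢ Icc 0 1))
include hk

theorem continuousOn_kernel_apply {t : ℝ} (ht : t ∈ Icc (0:ℝ) 1) :
    ContinuousOn (k t) (Icc 0 1) :=
  hk.comp (continuousOn_const.prodMk continuousOn_id) fun _ hs => ⟨ht, hs⟩

theorem intervalIntegrable_kernel_mul {t : ℝ} (ht : t ∈ Icc (0:ℝ) 1) {g : ℝ → ℝ}
    (hg : ContinuousOn g (Icc 0 1)) : IntervalIntegrable (fun s => k t s * g s) volume 0 1 :=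
  ((continuousOn_kernel_apply hk ht).mul hg).intervalIntegrable_of_Icc zero_le_one

theorem bddAbove_abs_integral_kernel_mul {g : ℝ → ℝ} (hg : ContinuousOn g (Icc 0 1)) :
    BddAbove (range fun t : Icc (0:ℝ) 1 => |∫ s in (0:ℝ)..1, k t s * g s|) := by
  obtain ⟨M, hM⟩ := (isCompact_Icc.prod isCompact_Icc).exists_bound_of_continuousOn hk
  obtain ⟨B, hB⟩ := isCompact_Icc.exists_bound_of_continuousOn hg
  refine ⟨M * B, ?_⟩
  rintro _ ⟨t, rfl⟩
  have hbound : ∀ s ∈ uIoc (0:ℝ) 1, ‖k t s * g s‖ ≤ M * B := by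
    intro s hs
    rw [uIoc_of_le zero_le_one] at hs
    have hs' : s ∈ Icc (0:ℝ) 1 := Ioc_subset_Icc_self hs
    rw [norm_mul]
    exact mul_le_mul (hM (t, s) ⟨t.2, hs'⟩) (hB s hs') (norm_nonneg _)
      ((norm_nonneg _).trans (hM (t, s) ⟨t.2, hs'⟩))
  simpa using intervalIntegral.norm_integral_le_of_norm_le_const hbound

theorem neg_integral_kernel_mul_le_iSup_abs {g : ℝ → ℝ} (hg : ContinuousOn g (Icc 0 1))
    {t₀ : ℝ} (ht₀ : t₀ ∈ Icc (0:ℝ) 1) :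
    -(∫ s in (0:ℝ)..1, k t₀ s * g s) ≤
      ⨆ t : Icc (0:ℝ) 1, |∫ s in (0:ℝ)..1, k t s * g s| :=
  (neg_le_abs _).trans <|
    le_ciSup (f := fun t : Icc (0:ℝ) 1 => |∫ s in (0:ℝ)..1, k t s * g s|)
      (bddAbove_abs_integral_kernel_mul hk hg) ⟨t₀, ht₀⟩

theorem integral_kernel_mul_mono {t : ℝ} (ht : t ∈ Icc (0:ℝ) 1)
    (hk_nonneg : ∀ s ∈ Icc (0:ℝ) 1, 0 ≤ k t s) {g h : ℝ → ℝ}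
    (hg : ContinuousOn g (Icc 0 1)) (hh : ContinuousOn h (Icc 0 1))
    (hgh : ∀ s ∈ Icc (0:ℝ) 1, g s ≤ h s) :
    ∫ s in (0:ℝ)..1, k t s * g s ≤ ∫ s in (0:ℝ)..1, k t s * h s :=
  intervalIntegral.integral_mono_on zero_le_one (intervalIntegrable_kernel_mul hk ht hg)
    (intervalIntegrable_kernel_mul hk ht hh)
    fun s hs => mul_le_mul_of_nonneg_left (hgh s hs) (hk_nonneg s hs)

theorem neg_integral_kernel_mul_chain {t₀ : ℝ} (ht₀ : t₀ ∈ Icc (0:ℝ) 1)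
    (hk_nonneg : ∀ s ∈ Icc (0:ℝ) 1, 0 ≤ k t₀ s) {g h : ℝ → ℝ}
    (hg : ContinuousOn g (Icc 0 1)) (hh : ContinuousOn h (Icc 0 1))
    (hgh : ∀ s ∈ Icc (0:ℝ) 1, g s ≤ h s) :
    -(∫ s in (0:ℝ)..1, k t₀ s * g s) ≤ ⨆ t : Icc (0:ℝ) 1, |∫ s in (0:ℝ)..1, k t s * g s| ∧
      -(∫ s in (0:ℝ)..1, k t₀ s * h s) ≤ -(∫ s in (0:ℝ)..1, k t₀ s * g s) :=
  ⟨neg_integral_kernel_mul_le_iSup_abs hk hg ht₀,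
    neg_le_neg (integral_kernel_mul_mono hk ht₀ hk_nonneg hg hh hgh)⟩

end Kernel

theorem continuousOn_superposition {ρ Hlo Hup c : ℝ} {f : ℝ → ℝ → ℝ → ℝ}
    (hf : ContinuousOn (fun p : ℝ × ℝ × ℝ => f p.1 p.2.1 p.2.2)
      (Icc 0 1 ×ˢ Icc (-ρ) ρ ×ˢ Icc Hlo Hup))
    {u : C(Icc (0:ℝ) 1, ℝ)} (hu : ‖u‖ ≤ ρ) (hc : c ∈ Icc Hlo Hup) :
    ContinuousOn (fun s => f s (u (projIcc 0 1 zero_le_one s)) c) (Icc 0 1) :=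
  hf.comp (continuousOn_id.prodMk
      ((u.continuous.comp continuous_projIcc).continuousOn.prodMk continuousOn_const))
    fun _ hs => ⟨hs, u.apply_mem_Icc_of_norm_le hu _, hc⟩

theorem hammerstein_inf_positive_5a_general
    (ρ : ℝ) (hρ : 0 < ρ)
    (k : ℝ → ℝ → ℝ)
    (hk_cont : ContinuousOn (fun p : ℝ × ℝ => k p.1 p.2)
      (Set.Icc 0 1 ×ˢ Set.Icc 0 1))
    (hk_nonneg : ∀ t ∈ Set.Icc (0:ℝ) 1, ∀ s ∈ Set.Icc (0:ℝ) 1, 0 ≤ k t s)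
    (H : C(Set.Icc (0:ℝ) 1, ℝ) → ℝ)
    (Hlo Hup : ℝ)
    (hH_bd : ∀ u ∈ Metric.closedBall (0 : C(Set.Icc (0:ℝ) 1, ℝ)) ρ,
      Hlo ≤ H u ∧ H u ≤ Hup)
    (f : ℝ → ℝ → ℝ → ℝ)
    (hf_cont : ContinuousOn (fun p : ℝ × ℝ × ℝ => f p.1 p.2.1 p.2.2)
      (Set.Icc 0 1 ×ˢ Set.Icc (-ρ) ρ ×ˢ Set.Icc Hlo Hup))
    (flo fup : ℝ → ℝ)
    (hfup_cont : ContinuousOn fup (Set.Icc 0 1))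
    (hf_bd : ∀ t ∈ Set.Icc (0:ℝ) 1, ∀ u ∈ Set.Icc (-ρ) ρ, ∀ v ∈ Set.Icc Hlo Hup,
      flo t ≤ f t u v ∧ f t u v ≤ fup t)
    (tρ : ℝ) (htρ : tρ ∈ Set.Icc (0:ℝ) 1)
    (h5a : (∫ s in (0:ℝ)..1, k tρ s * fup s) < 0) :
    (∀ u : C(Set.Icc (0:ℝ) 1, ℝ), ‖u‖ = ρ →
      (-(∫ s in (0:ℝ)..1, k tρ s * f s (u (Set.projIcc 0 1 zero_le_one s)) (H u)) ≤
        ⨆ t : Set.Icc (0:ℝ) 1,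
          |∫ s in (0:ℝ)..1, k (t:ℝ) s * f s (u (Set.projIcc 0 1 zero_le_one s)) (H u)|) ∧
      (-(∫ s in (0:ℝ)..1, k tρ s * fup s) ≤
        -(∫ s in (0:ℝ)..1, k tρ s * f s (u (Set.projIcc 0 1 zero_le_one s)) (H u)))) ∧
    0 < -(∫ s in (0:ℝ)..1, k tρ s * fup s) ∧
    0 < ⨅ u : {u : C(Set.Icc (0:ℝ) 1, ℝ) // ‖u‖ = ρ},
        ⨆ t : Set.Icc (0:ℝ) 1,
          |∫ s in (0:ℝ)..1, k (t:ℝ) s * f s ((u : C(Set.Icc (0:ℝ) 1, ℝ)) (Set.projIcc 0 1 zero_le_one s)) (H u)| := by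
  have chain (u : C(Icc (0:ℝ) 1, ℝ)) (hu : ‖u‖ = ρ) :=
    have hHu : H u ∈ Icc Hlo Hup := hH_bd u (by simp [hu])
    neg_integral_kernel_mul_chain hk_cont htρ (hk_nonneg tρ htρ)
      (continuousOn_superposition hf_cont hu.le hHu) hfup_cont
      fun s hs => (hf_bd s hs _ (u.apply_mem_Icc_of_norm_le hu.le _) _ hHu).2
  have hpos : 0 < -(∫ s in (0:ℝ)..1, k tρ s * fup s) := neg_pos.mpr h5a
  obtain ⟨u₀, hu₀⟩ := (NormedSpace.sphere_nonempty (x := (0 : C(Icc (0:ℝ) 1, ℝ)))).mpr hρ.le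
  have : Nonempty {u : C(Icc (0:ℝ) 1, ℝ) // ‖u‖ = ρ} := ⟨⟨u₀, mem_sphere_zero_iff_norm.mp hu₀⟩⟩
  refine ⟨chain, hpos, hpos.trans_le (le_ciInf fun u => ?_)⟩
  exact (chain u u.2).2.trans (chain u u.2).1

/-- Under assumptions (1)-(4), if F_up(t_rho) < 0 for some t_rho in [0,1], then
for every u with sup-norm rho one has the chain
sup-norm of Tu >= -Tu(t_rho) >= -F_up(t_rho) > 0; in particular the infimum
over such u of the sup-norm of Tu is strictly positive. -/
theorem hammerstein_inf_positive_5a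
    (ρ : ℝ) (hρ : 0 < ρ)
    (k : ℝ → ℝ → ℝ)
    (hk_cont : ContinuousOn (fun p : ℝ × ℝ => k p.1 p.2)
      (Set.Icc 0 1 ×ˢ Set.Icc 0 1))
    (hk_nonneg : ∀ t ∈ Set.Icc (0:ℝ) 1, ∀ s ∈ Set.Icc (0:ℝ) 1, 0 ≤ k t s)
    (H : C(Set.Icc (0:ℝ) 1, ℝ) → ℝ)
    (hH_cont : ContinuousOn H (Metric.closedBall 0 ρ))
    (Hlo Hup : ℝ)
    (hH_bd : ∀ u ∈ Metric.closedBall (0 : C(Set.Icc (0:ℝ) 1, ℝ)) ρ,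
      Hlo ≤ H u ∧ H u ≤ Hup)
    (f : ℝ → ℝ → ℝ → ℝ)
    (hf_cont : ContinuousOn (fun p : ℝ × ℝ × ℝ => f p.1 p.2.1 p.2.2)
      (Set.Icc 0 1 ×ˢ Set.Icc (-ρ) ρ ×ˢ Set.Icc Hlo Hup))
    (flo fup : ℝ → ℝ)
    (hflo_cont : ContinuousOn flo (Set.Icc 0 1))
    (hfup_cont : ContinuousOn fup (Set.Icc 0 1))
    (hf_bd : ∀ t ∈ Set.Icc (0:ℝ) 1, ∀ u ∈ Set.Icc (-ρ) ρ, ∀ v ∈ Set.Icc Hlo Hup,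
      flo t ≤ f t u v ∧ f t u v ≤ fup t)
    (tρ : ℝ) (htρ : tρ ∈ Set.Icc (0:ℝ) 1)
    (h5a : (∫ s in (0:ℝ)..1, k tρ s * fup s) < 0) :
    (∀ u : C(Set.Icc (0:ℝ) 1, ℝ), ‖u‖ = ρ →
      (-(∫ s in (0:ℝ)..1, k tρ s * f s (u (Set.projIcc 0 1 zero_le_one s)) (H u)) ≤
        ⨆ t : Set.Icc (0:ℝ) 1,
          |∫ s in (0:ℝ)..1, k (t:ℝ) s * f s (u (Set.projIcc 0 1 zero_le_one s)) (H u)|) ∧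
      (-(∫ s in (0:ℝ)..1, k tρ s * fup s) ≤
        -(∫ s in (0:ℝ)..1, k tρ s * f s (u (Set.projIcc 0 1 zero_le_one s)) (H u)))) ∧
    0 < -(∫ s in (0:ℝ)..1, k tρ s * fup s) ∧
    0 < ⨅ u : {u : C(Set.Icc (0:ℝ) 1, ℝ) // ‖u‖ = ρ},
        ⨆ t : Set.Icc (0:ℝ) 1,
          |∫ s in (0:ℝ)..1, k (t:ℝ) s * f s ((u : C(Set.Icc (0:ℝ) 1, ℝ)) (Set.projIcc 0 1 zero_le_one s)) (H u)| :=
  hammerstein_inf_positive_5a_general ρ hρ k hk_cont hk_nonneg H Hlo Hup hH_bd f hf_cont flo fup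
    hfup_cont hf_bd tρ htρ h5a
end

section
/- Let ρ > 0, let k(t,s) := min{t,s} on [0,1]², and define F_low(t) := e^{−2ρ} ∫₀^{2/3} k(t,s) sin((3π/2)s) ds + e^{2ρ} ∫_{2/3}^{1} k(t,s) sin((3π/2)s) ds. Then F_low is nonincreasing on [2/3, 1], and F_low(2/3) = (4/(9π))(e^{−2ρ} − e^{2ρ}) < 0. -/
open MeasureTheory Set Real

/-!
Raising `t` changes `min t s` only at `s > t`, and there it increases it. For `t ≥ 2/3` those
`s` lie where `sin (3π/2 · s) ≤ 0`, so both integrals defining `Flow` decrease in `t`. At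
`t = 2/3` the kernel is `s` on `[0, 2/3]` and the constant `2/3` on `[2/3, 1]`, and the value
follows from the antiderivatives of `s sin (ω s)` and `sin (ω s)`.
-/

theorem antitoneOn_integral_min_mul {g : ℝ → ℝ} {a b c : ℝ} (hab : a ≤ b)
    (hg : IntervalIntegrable g volume a b) (hg_nonpos : ∀ s ∈ Icc c b, g s ≤ 0) :
    AntitoneOn (fun t => ∫ s in a..b, min t s * g s) (Ici c) := by
  intro t ht u _ htu
  have hint (v : ℝ) : IntervalIntegrable (fun s => min v s * g s) volume a b :=
    hg.continuousOn_mul (continuous_const.min continuous_id).continuousOn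
  refine intervalIntegral.integral_mono_on hab (hint u) (hint t) fun s hs => ?_
  rcases le_or_gt s t with hst | hts
  · rw [min_eq_right hst, min_eq_right (hst.trans htu)]
  · have hgs : g s ≤ 0 := hg_nonpos s ⟨(mem_Ici.mp ht).trans hts.le, hs.2⟩
    exact mul_le_mul_of_nonpos_right (min_le_min_right s htu) hgs

theorem integral_min_mul_of_upper_le {g : ℝ → ℝ} {a b t : ℝ} (hab : a ≤ b)
    (hbt : b ≤ t) :
    ∫ s in a..b, min t s * g s = ∫ s in a..b, s * g s := by
  refine intervalIntegral.integral_congr fun s hs => ?_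
  rw [uIcc_of_le hab] at hs
  simp only [min_eq_right (hs.2.trans hbt)]

theorem integral_min_mul_of_le_lower {g : ℝ → ℝ} {a b t : ℝ} (hab : a ≤ b)
    (hta : t ≤ a) :
    ∫ s in a..b, min t s * g s = t * ∫ s in a..b, g s := by
  rw [← intervalIntegral.integral_const_mul]
  refine intervalIntegral.integral_congr fun s hs => ?_
  rw [uIcc_of_le hab] at hs
  simp only [min_eq_left (hta.trans hs.1)]

theorem integral_sin_mul {ω : ℝ} (hω : ω ≠ 0) (a b : ℝ) :
    ∫ s in a..b, sin (ω * s) = (cos (ω * a) - cos (ω * b)) / ω := by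
  rw [intervalIntegral.integral_comp_mul_left (fun x => sin x) hω, integral_sin, smul_eq_mul,
    inv_mul_eq_div]

theorem integral_mul_sin_mul {ω : ℝ} (hω : ω ≠ 0) (a b : ℝ) :
    ∫ s in a..b, s * sin (ω * s) =
      (sin (ω * b) / ω ^ 2 - b * cos (ω * b) / ω) -
        (sin (ω * a) / ω ^ 2 - a * cos (ω * a) / ω) := by
  refine intervalIntegral.integral_eq_sub_of_hasDerivAt
    (f := fun s => sin (ω * s) / ω ^ 2 - s * cos (ω * s) / ω) (fun s _ => ?_)
    ((by fun_prop : Continuous fun s => s * sin (ω * s)).intervalIntegrable _ _)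
  have hlin : HasDerivAt (fun s => ω * s) ω s := by simpa using (hasDerivAt_id s).const_mul ω
  refine ((hlin.sin.div_const (ω ^ 2)).sub
    (((hasDerivAt_id s).mul hlin.cos).div_const ω)).congr_deriv ?_
  simp only [id_eq]
  field_simp
  ring

theorem sin_three_pi_div_two_mul_nonpos {s : ℝ} (hs : s ∈ Icc (2 / 3 : ℝ) (4 / 3)) :
    sin (3 * π / 2 * s) ≤ 0 := by
  have h : 3 * π / 2 * s = (3 * π / 2 * s - π) + π := by ring
  rw [h, sin_add_pi, neg_nonpos]
  apply sin_nonneg_of_nonneg_of_le_pi <;> nlinarith [pi_pos, hs.1, hs.2]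

/-- For the mixed-BC Green's function k(t,s) = min(t,s), the function F_low is
nonincreasing on [2/3, 1] and F_low(2/3) = (4/(9 pi))(exp(-2 rho) - exp(2 rho)) < 0. -/
theorem mixed_Flow_on_right_interval
    (ρ : ℝ) (hρ : 0 < ρ)
    (Flow : ℝ → ℝ)
    (hFlow : ∀ t : ℝ, Flow t =
      Real.exp (-(2*ρ)) * (∫ s in (0:ℝ)..(2/3), min t s * Real.sin (3 * π / 2 * s)) +
      Real.exp (2*ρ) * ∫ s in (2/3:ℝ)..1, min t s * Real.sin (3 * π / 2 * s)) :
    AntitoneOn Flow (Set.Icc (2/3 : ℝ) 1) ∧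
    Flow (2/3) = 4 / (9 * π) * (Real.exp (-(2*ρ)) - Real.exp (2*ρ)) ∧
    Flow (2/3) < 0 := by
  have hω : 3 * π / 2 ≠ 0 := by positivity
  have hsin_int (a b : ℝ) : IntervalIntegrable (fun s => sin (3 * π / 2 * s)) volume a b :=
    (by fun_prop : Continuous fun s => sin (3 * π / 2 * s)).intervalIntegrable _ _
  have hval : Flow (2 / 3) = 4 / (9 * π) * (exp (-(2 * ρ)) - exp (2 * ρ)) := by
    rw [hFlow, integral_min_mul_of_upper_le (by norm_num) le_rfl, integral_mul_sin_mul hω,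
      integral_min_mul_of_le_lower (by norm_num) le_rfl, integral_sin_mul hω]
    have h1 : 3 * π / 2 * (2 / 3 : ℝ) = π := by ring
    have h2 : 3 * π / 2 * (1 : ℝ) = π / 2 + π := by ring
    simp only [h1, h2, mul_zero, sin_pi, cos_pi, sin_zero, cos_add_pi, cos_pi_div_two]
    field_simp
    ring
  refine ⟨fun x hx y hy hxy => ?_, hval, ?_⟩
  · have hleft := antitoneOn_integral_min_mul (c := 2 / 3) (by norm_num) (hsin_int 0 (2 / 3))
      (fun s hs => sin_three_pi_div_two_mul_nonpos ⟨hs.1, by linarith [hs.2]⟩) hx.1 hy.1 hxy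
    have hright := antitoneOn_integral_min_mul (c := 2 / 3) (by norm_num) (hsin_int (2 / 3) 1)
      (fun s hs => sin_three_pi_div_two_mul_nonpos ⟨hs.1, by linarith [hs.2]⟩) hx.1 hy.1 hxy
    rw [hFlow, hFlow]
    gcongr
  · rw [hval]
    have : exp (-(2 * ρ)) < exp (2 * ρ) := exp_lt_exp.mpr (by linarith)
    have : 0 < 4 / (9 * π) := by positivity
    nlinarith
end

section
/- Let k(t,s) := min{t,s} on [0,1]². For every ρ with 0 < ρ < (1/4)·ln 2, there exist λ_ρ⁺ > 0, λ_ρ⁻ < 0 and continuous functions u⁺, u⁻ : [0,1] → ℝ with ‖u⁺‖_∞ = ‖u⁻‖_∞ = ρ such that u^{±}(t) = λ_ρ^{±} ∫₀¹ k(t,s) · sin((3π/2)s) · e^{u^{±}(s)} / (∫₀¹ e^{u^{±}(x)} dx) ds for all t ∈ [0,1]. -/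
/-!
Write `f(s, u) = sin(3πs/2) e^{min(u, 1)}`. For every `ν` the terminal value problem
`-U'' = ν f(s, U)`, `U(1) = U'(1) = 0` is the fixed point equation of a Volterra operator whose
`k`-th iterate is `(|ν| L)^k / (2k)!`-Lipschitz, so some iterate is a contraction and the fixed
point `U_ν` exists and depends continuously on `ν`. Then `w_ν = U_ν - U_ν(0)` satisfies
`w_ν(t) = ν ∫₀¹ min(t, s) f(s, U_ν(s)) ds`, and `|U_ν| ≤ 2‖w_ν‖` since `U_ν(1) = 0`. Once
`‖w_ν‖ ≤ 1/2` the truncation is inactive, `f(s, U_ν) = e^{U_ν(0)} sin(3πs/2) e^{w_ν}`, and `w_ν`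
solves the integral equation with `λ = ν e^{U_ν(0)} ∫₀¹ e^{w_ν}`, which has the sign of `ν`.

Finally `w_0 = 0`, while for `|ν| = 12` the sign of `sin(3πs/2)` on `[2/3, 1]` makes
`|U_ν(2/3)| = 12 |∫_{2/3}^1 (s - 2/3) f(s, U_ν(s)) ds|` larger than `(log 2)/2`, which forces
`‖w_ν‖ ≥ (log 2)/4 > ρ`. The intermediate value theorem for `ν ↦ ‖w_ν‖` on `[0, 12]` and on
`[-12, 0]` gives the two eigenvalues.
-/

open MeasureTheory Set Real Function unitInterval
open scoped NNReal Nat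

noncomputable section

namespace MixedBVP

theorem dist_iterate_iterate_le {α : Type*} [PseudoMetricSpace α] {f g : α → α} {L : ℝ≥0}
    (hf : LipschitzWith L f) {C : ℝ} (hfg : ∀ x, dist (f x) (g x) ≤ C) (n : ℕ) (x : α) :
    dist (f^[n] x) (g^[n] x) ≤ (∑ i ∈ Finset.range n, (L : ℝ) ^ i) * C := by
  induction n with
  | zero => simp
  | succ n ih =>
    rw [iterate_succ_apply', iterate_succ_apply']
    calc dist (f (f^[n] x)) (g (g^[n] x))
        ≤ dist (f (f^[n] x)) (f (g^[n] x)) + dist (f (g^[n] x)) (g (g^[n] x)) :=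
          dist_triangle _ _ _
      _ ≤ L * ((∑ i ∈ Finset.range n, (L : ℝ) ^ i) * C) + C :=
          add_le_add ((hf.dist_le_mul _ _).trans (by gcongr)) (hfg _)
      _ = _ := by
          simp [Finset.sum_range_succ', pow_succ', Finset.mul_sum, Finset.sum_mul, add_mul,
            mul_assoc]

theorem abs_exp_sub_exp_le {a b c : ℝ} (ha : a ≤ c) (hb : b ≤ c) :
    |exp a - exp b| ≤ exp c * |a - b| := by
  wlog hab : b ≤ a generalizing a b
  · rw [abs_sub_comm, abs_sub_comm a]
    exact this hb ha (le_of_not_ge hab)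
  have hexp : exp a * (b - a + 1) ≤ exp b :=
    calc exp a * (b - a + 1) ≤ exp a * exp (b - a) :=
          mul_le_mul_of_nonneg_left (add_one_le_exp _) (exp_pos a).le
      _ = exp b := by rw [← exp_add, add_sub_cancel]
  rw [abs_of_nonneg (sub_nonneg.2 (exp_le_exp.2 hab)), abs_of_nonneg (sub_nonneg.2 hab)]
  nlinarith [exp_le_exp.2 ha]

/-- The solution of `-u'' = f`, `u(1) = u'(1) = 0`. -/
def tailIntegral (f : ℝ → ℝ) (t : ℝ) : ℝ := ∫ s in t..1, (s - t) * f s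

section tailIntegral

variable {f g : ℝ → ℝ}

@[simp]
theorem tailIntegral_one : tailIntegral f 1 = 0 := by simp [tailIntegral]

theorem continuous_tailIntegral (hf : Continuous f) : Continuous (tailIntegral f) := by
  have : Continuous fun t => ∫ s in (1 : ℝ)..t, (s - t) * f s :=
    intervalIntegral.continuous_parametric_intervalIntegral_of_continuous (by fun_prop)
      continuous_id
  exact this.neg.congr fun t => (intervalIntegral.integral_symm 1 t).symm

theorem tailIntegral_sub (hf : Continuous f) (hg : Continuous g) (t : ℝ) :
    tailIntegral (fun s => f s - g s) t = tailIntegral f t - tailIntegral g t := by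
  simp only [tailIntegral, mul_sub]
  exact intervalIntegral.integral_sub
    ((by fun_prop : Continuous fun s => (s - t) * f s).intervalIntegrable _ _)
    ((by fun_prop : Continuous fun s => (s - t) * g s).intervalIntegrable _ _)

theorem tailIntegral_const_mul (c : ℝ) (f : ℝ → ℝ) (t : ℝ) :
    tailIntegral (fun s => c * f s) t = c * tailIntegral f t := by
  simp only [tailIntegral, mul_left_comm _ c, intervalIntegral.integral_const_mul]

theorem tailIntegral_mono (hf : Continuous f) (hg : Continuous g) {t : ℝ} (ht : t ≤ 1)
    (hfg : ∀ s ∈ Icc t 1, f s ≤ g s) : tailIntegral f t ≤ tailIntegral g t :=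
  intervalIntegral.integral_mono_on ht
    ((by fun_prop : Continuous fun s => (s - t) * f s).intervalIntegrable _ _)
    ((by fun_prop : Continuous fun s => (s - t) * g s).intervalIntegrable _ _)
    fun s hs => mul_le_mul_of_nonneg_left (hfg s hs) (sub_nonneg.2 hs.1)

theorem tailIntegral_zero_sub (hf : Continuous f) {t : ℝ} (ht₀ : 0 ≤ t) (ht₁ : t ≤ 1) :
    tailIntegral f 0 - tailIntegral f t = ∫ s in (0 : ℝ)..1, min t s * f s := by
  have hint : ∀ {h : ℝ → ℝ}, Continuous h → ∀ a b : ℝ,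
      IntervalIntegrable (fun s => h s * f s) volume a b :=
    fun hh a b => (hh.mul hf).intervalIntegrable a b
  have hleft : ∫ s in (0 : ℝ)..t, min t s * f s = ∫ s in (0 : ℝ)..t, (s - 0) * f s :=
    intervalIntegral.integral_congr fun s hs => by
      rw [uIcc_of_le ht₀] at hs
      simp [min_eq_right hs.2]
  have hright : ∫ s in t..1, min t s * f s = ∫ s in t..1, ((s - 0) * f s - (s - t) * f s) :=
    intervalIntegral.integral_congr fun s hs => by
      rw [uIcc_of_le ht₁] at hs
      simp only [min_eq_left hs.1]
      ring
  rw [tailIntegral, tailIntegral,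
    ← intervalIntegral.integral_add_adjacent_intervals (hint (by fun_prop) 0 t)
      (hint (by fun_prop) t 1),
    ← intervalIntegral.integral_add_adjacent_intervals (hint (by fun_prop) 0 t)
      (hint (by fun_prop) t 1),
    hleft, hright, intervalIntegral.integral_sub (hint (by fun_prop) t 1) (hint (by fun_prop) t 1)]
  ring

theorem integral_sub_mul_one_sub_pow (t : ℝ) (m : ℕ) :
    ∫ s in t..1, (s - t) * (1 - s) ^ m = (1 - t) ^ (m + 2) / ((m + 1) * (m + 2)) := by
  have hpow : ∀ n : ℕ, ∫ s in t..1, (1 - s) ^ n = (1 - t) ^ (n + 1) / (n + 1) := fun n => by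
    simp [intervalIntegral.integral_comp_sub_left (fun x => x ^ n) 1, integral_pow]
  have hsplit : ∫ s in t..1, (s - t) * (1 - s) ^ m
      = ∫ s in t..1, ((1 - t) * (1 - s) ^ m - (1 - s) ^ (m + 1)) :=
    intervalIntegral.integral_congr fun s _ => by ring
  rw [hsplit, intervalIntegral.integral_sub (Continuous.intervalIntegrable (by fun_prop) _ _)
    (Continuous.intervalIntegrable (by fun_prop) _ _), intervalIntegral.integral_const_mul, hpow,
    hpow]
  push_cast
  field_simp
  ring

theorem abs_tailIntegral_le {t C : ℝ} {m : ℕ} (ht : t ≤ 1)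
    (hf : ∀ s ∈ Ioc t 1, |f s| ≤ C * (1 - s) ^ m) :
    |tailIntegral f t| ≤ C * ((1 - t) ^ (m + 2) / ((m + 1) * (m + 2))) :=
  calc |tailIntegral f t| ≤ ∫ s in t..1, C * ((s - t) * (1 - s) ^ m) := by
        rw [tailIntegral, ← Real.norm_eq_abs]
        refine intervalIntegral.norm_integral_le_of_norm_le ht (ae_of_all _ fun s hs => ?_)
          ((by fun_prop : Continuous fun s => C * ((s - t) * (1 - s) ^ m)).intervalIntegrable _ _)
        rw [Real.norm_eq_abs, abs_mul, abs_of_nonneg (sub_nonneg.2 hs.1.le), mul_left_comm]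
        exact mul_le_mul_of_nonneg_left (hf s hs) (sub_nonneg.2 hs.1.le)
    _ = _ := by rw [intervalIntegral.integral_const_mul, integral_sub_mul_one_sub_pow]

end tailIntegral

theorem tailIntegral_two_thirds_sin :
    tailIntegral (fun s => sin (3 * π / 2 * s)) (2 / 3) = -(4 / (9 * π ^ 2)) := by
  set a := 3 * π / 2
  have ha : a ≠ 0 := by positivity
  have hderiv : ∀ s, HasDerivAt (fun s => -((s - 2 / 3) * cos (a * s)) / a + sin (a * s) / a ^ 2)
      ((s - 2 / 3) * sin (a * s)) s := fun s => by
    have hlin : HasDerivAt (fun s => a * s) a s := by simpa using (hasDerivAt_id s).const_mul a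
    refine (((((hasDerivAt_id s).sub_const (2 / 3)).mul hlin.cos).neg.div_const a).add
      (hlin.sin.div_const (a ^ 2))).congr_deriv ?_
    simp only [id]
    field_simp
    ring
  rw [tailIntegral, intervalIntegral.integral_eq_sub_of_hasDerivAt (fun s _ => hderiv s)
    (Continuous.intervalIntegrable (by fun_prop) _ _)]
  have h1 : a * 1 = π + π / 2 := by ring
  have h23 : a * (2 / 3) = π := by ring
  simp only [h1, h23, sin_add, cos_add, sin_pi, cos_pi, sin_pi_div_two, cos_pi_div_two]
  field_simp
  ring

theorem sin_three_pi_div_two_mul_nonpos {s : ℝ} (hs : s ∈ Icc (2 / 3 : ℝ) 1) :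
    sin (3 * π / 2 * s) ≤ 0 := by
  rw [← sin_sub_two_pi]
  apply sin_nonpos_of_nonpos_of_neg_pi_le <;> nlinarith [pi_pos, hs.1, hs.2]

def nemytskii (F : C(ℝ × ℝ, ℝ)) (U : C(I, ℝ)) (s : ℝ) : ℝ :=
  F (s, U (projIcc 0 1 zero_le_one s))

theorem continuous_nemytskii (F : C(ℝ × ℝ, ℝ)) (U : C(I, ℝ)) : Continuous (nemytskii F U) :=
  F.continuous.comp (continuous_id.prodMk (U.continuous.comp continuous_projIcc))

theorem nemytskii_of_mem (F : C(ℝ × ℝ, ℝ)) (U : C(I, ℝ)) {s : ℝ} (hs : s ∈ I) :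
    nemytskii F U s = F (s, U ⟨s, hs⟩) := by
  simp [nemytskii, projIcc_of_mem _ hs]

def volterra (F : C(ℝ × ℝ, ℝ)) (ν : ℝ) (U : C(I, ℝ)) : C(I, ℝ) :=
  ⟨fun t => -ν * tailIntegral (nemytskii F U) t,
    continuous_const.mul
      ((continuous_tailIntegral (continuous_nemytskii F U)).comp continuous_subtype_val)⟩

section volterra

variable (F : C(ℝ × ℝ, ℝ))

@[simp]
theorem volterra_apply (ν : ℝ) (U : C(I, ℝ)) (t : I) :
    volterra F ν U t = -ν * tailIntegral (nemytskii F U) t := rfl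

@[simp]
theorem volterra_zero (U : C(I, ℝ)) : volterra F 0 U = 0 := by
  ext t
  simp

theorem volterra_apply_one (ν : ℝ) (U : C(I, ℝ)) : volterra F ν U 1 = 0 := by
  simp

theorem volterra_sub_volterra_apply_zero (ν : ℝ) (U : C(I, ℝ)) (t : I) :
    volterra F ν U t - volterra F ν U 0
      = ν * ∫ s in (0 : ℝ)..1, min (t : ℝ) s * nemytskii F U s := by
  rw [← tailIntegral_zero_sub (continuous_nemytskii F U) t.2.1 t.2.2]
  simp only [volterra_apply, Icc.coe_zero]
  ring

variable {F} {L : ℝ≥0}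

theorem abs_volterra_sub_le (hL : ∀ s, LipschitzWith L fun x => F (s, x)) {U V : C(I, ℝ)}
    {C : ℝ} {m : ℕ} (hUV : ∀ x : I, |U x - V x| ≤ C * (1 - x) ^ m) (ν : ℝ) (t : I) :
    |volterra F ν U t - volterra F ν V t|
      ≤ |ν| * L * C * ((1 - t) ^ (m + 2) / ((m + 1) * (m + 2))) := by
  have hsub : volterra F ν U t - volterra F ν V t
      = -ν * tailIntegral (fun s => nemytskii F U s - nemytskii F V s) t := by
    rw [tailIntegral_sub (continuous_nemytskii F U) (continuous_nemytskii F V)]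
    simp only [volterra_apply]
    ring
  rw [hsub, abs_mul, abs_neg, mul_assoc |ν|, mul_assoc |ν|]
  gcongr
  refine abs_tailIntegral_le t.2.2 fun s hs => ?_
  have hsI : s ∈ I := Ioc_subset_Icc_self (Ioc_subset_Ioc_left t.2.1 hs)
  rw [nemytskii_of_mem F U hsI, nemytskii_of_mem F V hsI, ← Real.dist_eq, mul_assoc]
  refine ((hL s).dist_le_mul _ _).trans (mul_le_mul_of_nonneg_left ?_ L.2)
  exact (hUV ⟨s, hsI⟩).trans_eq' (Real.dist_eq _ _)

theorem abs_iterate_volterra_sub_le (hL : ∀ s, LipschitzWith L fun x => F (s, x)) (ν : ℝ) (k : ℕ)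
    (U V : C(I, ℝ)) (t : I) :
    |(volterra F ν)^[k] U t - (volterra F ν)^[k] V t|
      ≤ (|ν| * L) ^ k * (1 - t) ^ (2 * k) / (2 * k)! * dist U V := by
  induction k generalizing t with
  | zero => simpa [Real.dist_eq] using ContinuousMap.dist_apply_le_dist (f := U) (g := V) t
  | succ k ih =>
    rw [iterate_succ_apply', iterate_succ_apply']
    refine (abs_volterra_sub_le hL (C := (|ν| * L) ^ k / (2 * k)! * dist U V) (m := 2 * k)
      (fun x => (ih x).trans_eq (by ring)) ν t).trans_eq ?_
    rw [show 2 * (k + 1) = 2 * k + 1 + 1 by ring, Nat.factorial_succ, Nat.factorial_succ]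
    push_cast
    field_simp
    ring

theorem dist_iterate_volterra_le (hL : ∀ s, LipschitzWith L fun x => F (s, x)) (ν : ℝ) (k : ℕ)
    (U V : C(I, ℝ)) :
    dist ((volterra F ν)^[k] U) ((volterra F ν)^[k] V) ≤ (|ν| * L) ^ k / (2 * k)! * dist U V := by
  refine (ContinuousMap.dist_le (by positivity)).2 fun t => ?_
  rw [Real.dist_eq]
  refine (abs_iterate_volterra_sub_le hL ν k U V t).trans ?_
  have h1t : (1 - (t : ℝ)) ^ (2 * k) ≤ 1 := pow_le_one₀ (sub_nonneg.2 t.2.2) (by linarith [t.2.1])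
  rw [mul_div_right_comm]
  exact mul_le_mul_of_nonneg_right (mul_le_of_le_one_right (by positivity) h1t) (by positivity)

theorem lipschitzWith_volterra (hL : ∀ s, LipschitzWith L fun x => F (s, x)) (ν : ℝ) :
    LipschitzWith (‖ν‖₊ * L) (volterra F ν) := by
  refine LipschitzWith.of_dist_le_mul fun U V => ?_
  have h := dist_iterate_volterra_le hL ν 1 U V
  simp only [iterate_one, mul_one, Nat.factorial_two, Nat.cast_ofNat] at h
  refine h.trans (mul_le_mul_of_nonneg_right ?_ dist_nonneg)
  push_cast
  rw [Real.norm_eq_abs, pow_one]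
  linarith [(by positivity : (0 : ℝ) ≤ |ν| * L)]

theorem exists_contractingWith_iterate_volterra (hL : ∀ s, LipschitzWith L fun x => F (s, x))
    (R : ℝ) : ∃ k, ∀ ν, |ν| ≤ R → ContractingWith (1 / 2) (volterra F ν)^[k] := by
  obtain ⟨k, hk⟩ := ((FloorSemiring.tendsto_pow_div_factorial_atTop (R * L)).eventually
    (gt_mem_nhds (by norm_num : (0 : ℝ) < 1 / 2))).exists
  refine ⟨k, fun ν hν => ⟨by norm_num, LipschitzWith.of_dist_le_mul fun U V => ?_⟩⟩
  refine (dist_iterate_volterra_le hL ν k U V).trans (mul_le_mul_of_nonneg_right ?_ dist_nonneg)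
  calc (|ν| * L) ^ k / (2 * k)! ≤ (R * L) ^ k / k ! := by
        gcongr
        · exact pow_nonneg (mul_nonneg ((abs_nonneg ν).trans hν) L.coe_nonneg) k
        · omega
    _ ≤ ((1 / 2 : ℝ≥0) : ℝ) := by push_cast; exact hk.le

theorem dist_volterra_volterra_le {B : ℝ} (hB : ∀ p, |F p| ≤ B) (ν μ : ℝ) (U : C(I, ℝ)) :
    dist (volterra F ν U) (volterra F μ U) ≤ B * dist ν μ := by
  have hB₀ : 0 ≤ B := (abs_nonneg _).trans (hB 0)
  refine (ContinuousMap.dist_le (by positivity)).2 fun t => ?_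
  have h := abs_tailIntegral_le (f := nemytskii F U) (m := 0) t.2.2 fun s _ => by
    simpa [nemytskii] using hB _
  have h1t : (1 - (t : ℝ)) ^ 2 ≤ 1 := pow_le_one₀ (sub_nonneg.2 t.2.2) (by linarith [t.2.1])
  norm_num at h
  have hsub : volterra F ν U t - volterra F μ U t = (μ - ν) * tailIntegral (nemytskii F U) t := by
    simp only [volterra_apply]
    ring
  rw [Real.dist_eq, Real.dist_eq, hsub, abs_mul, abs_sub_comm, mul_comm B]
  refine mul_le_mul_of_nonneg_left (h.trans ?_) (abs_nonneg _)
  nlinarith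

theorem exists_continuous_isFixedPt_volterra (hL : ∀ s, LipschitzWith L fun x => F (s, x))
    {B : ℝ} (hB : ∀ p, |F p| ≤ B) :
    ∃ u : ℝ → C(I, ℝ), Continuous u ∧ ∀ ν, IsFixedPt (volterra F ν) (u ν) := by
  have hfix : ∀ ν, ∃ U, IsFixedPt (volterra F ν) U := fun ν => by
    obtain ⟨k, hk⟩ := exists_contractingWith_iterate_volterra hL |ν|
    exact ⟨_, (hk ν le_rfl).isFixedPt_fixedPoint_iterate⟩
  choose u hu using hfix
  refine ⟨u, continuous_iff_continuousAt.2 fun ν => ?_, hu⟩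
  obtain ⟨k, hk⟩ := exists_contractingWith_iterate_volterra hL (|ν| + 1)
  set K : ℝ≥0 := (‖ν‖₊ + 1) * L
  refine continuousAt_of_locally_lipschitz one_pos
    (2 * (∑ i ∈ Finset.range k, (K : ℝ) ^ i) * B) fun μ hμ => ?_
  have hμν : |μ| ≤ |ν| + 1 := by
    rw [Real.dist_eq] at hμ
    linarith [abs_sub_abs_le_abs_sub μ ν]
  have hK : LipschitzWith K (volterra F μ) := (lipschitzWith_volterra hL μ).weaken <|
    mul_le_mul_of_nonneg_right (by rw [← NNReal.coe_le_coe]; simpa using hμν) L.zero_le_coe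
  calc dist (u μ) (u ν)
      ≤ (∑ i ∈ Finset.range k, (K : ℝ) ^ i) * (B * dist μ ν) / (1 - ((1 / 2 : ℝ≥0) : ℝ)) :=
        (hk μ hμν).dist_fixedPoint_fixedPoint_of_dist_le' _ ((hu μ).iterate k) ((hu ν).iterate k)
          (dist_iterate_iterate_le hK (fun _ => dist_volterra_volterra_le hB μ ν _) k)
    _ = _ := by
        push_cast
        ring

end volterra

section isFixedPt

variable {F : C(ℝ × ℝ, ℝ)} {ν : ℝ} {U : C(I, ℝ)}

theorem apply_one_eq_zero_of_isFixedPt (hU : IsFixedPt (volterra F ν) U) : U 1 = 0 := by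
  rw [← hU.eq, volterra_apply_one]

theorem sub_const_apply_of_isFixedPt (hU : IsFixedPt (volterra F ν) U) (t : I) :
    (U - .const I (U 0)) t = ν * ∫ s in (0 : ℝ)..1, min (t : ℝ) s * nemytskii F U s := by
  rw [← volterra_sub_volterra_apply_zero, hU.eq]
  rfl

theorem abs_apply_le_of_isFixedPt (hU : IsFixedPt (volterra F ν) U) (x : I) :
    |U x| ≤ 2 * ‖U - .const I (U 0)‖ := by
  have hw : ∀ y, |(U - .const I (U 0)) y| ≤ ‖U - .const I (U 0)‖ :=
    ContinuousMap.norm_coe_le_norm (U - .const I (U 0))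
  have hx := hw x
  have h1 := hw 1
  rw [ContinuousMap.sub_apply, ContinuousMap.const_apply] at hx h1
  rw [apply_one_eq_zero_of_isFixedPt hU, zero_sub, abs_neg] at h1
  linarith [abs_sub_abs_le_abs_sub (U x) (U 0)]

end isFixedPt

/-- The exponential is truncated at `1` to make the nonlinearity globally Lipschitz; the truncation
is inactive along solutions with `U ≤ 1`. -/
def bvpNonlinearity : C(ℝ × ℝ, ℝ) :=
  ⟨fun p => sin (3 * π / 2 * p.1) * exp (min p.2 1), by fun_prop⟩

theorem lipschitzWith_bvpNonlinearity (s : ℝ) :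
    LipschitzWith (Real.toNNReal (exp 1)) fun x => bvpNonlinearity (s, x) :=
  LipschitzWith.of_dist_le' fun x y => by
    simp only [bvpNonlinearity, ContinuousMap.coe_mk, Real.dist_eq, ← mul_sub, abs_mul]
    calc |sin (3 * π / 2 * s)| * |exp (min x 1) - exp (min y 1)| ≤ 1 * (exp 1 * |x - y|) := by
          gcongr
          · exact abs_sin_le_one _
          · refine (abs_exp_sub_exp_le (min_le_right _ _) (min_le_right _ _)).trans ?_
            refine mul_le_mul_of_nonneg_left ?_ (exp_pos 1).le
            simpa using abs_min_sub_min_le_max x 1 y 1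
      _ = exp 1 * |x - y| := one_mul _

theorem abs_bvpNonlinearity_le (p : ℝ × ℝ) : |bvpNonlinearity p| ≤ exp 1 := by
  simp only [bvpNonlinearity, ContinuousMap.coe_mk, abs_mul, abs_exp]
  exact (mul_le_mul (abs_sin_le_one _) (exp_le_exp.2 (min_le_right _ _)) (exp_pos _).le
    zero_le_one).trans_eq (one_mul _)

def hammerstein (lam : ℝ) (w : C(I, ℝ)) (t : I) : ℝ :=
  lam * ∫ s in (0 : ℝ)..1, min (t : ℝ) s *
    (sin (3 * π / 2 * s) * exp (w (projIcc 0 1 zero_le_one s)) /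
      ∫ x in (0 : ℝ)..1, exp (w (projIcc 0 1 zero_le_one x)))

section bvp

variable {ν : ℝ} {U : C(I, ℝ)}

theorem exists_pos_hammerstein_of_isFixedPt (hU : IsFixedPt (volterra bvpNonlinearity ν) U)
    (hw : ‖U - .const I (U 0)‖ ≤ 1 / 2) :
    ∃ c > 0, ∀ t, (U - .const I (U 0)) t = hammerstein (ν * c) (U - .const I (U 0)) t := by
  set w := U - .const I (U 0)
  have hD : 0 < ∫ x in (0 : ℝ)..1, exp (w (projIcc 0 1 zero_le_one x)) :=
    intervalIntegral.intervalIntegral_pos_of_pos (Continuous.intervalIntegrable (by fun_prop) _ _)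
      (fun _ => exp_pos _) one_pos
  have hq : ∀ s, nemytskii bvpNonlinearity U s
      = exp (U 0) * (sin (3 * π / 2 * s) * exp (w (projIcc 0 1 zero_le_one s))) := fun s => by
    have hU₁ : U (projIcc 0 1 zero_le_one s) ≤ 1 :=
      (le_abs_self _).trans ((abs_apply_le_of_isFixedPt hU _).trans (by linarith))
    simp only [nemytskii, bvpNonlinearity, ContinuousMap.coe_mk, min_eq_left hU₁, w,
      ContinuousMap.sub_apply, ContinuousMap.const_apply, exp_sub]
    field_simp
  refine ⟨exp (U 0) * ∫ x in (0 : ℝ)..1, exp (w (projIcc 0 1 zero_le_one x)), by positivity,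
    fun t => ?_⟩
  have hint : ∫ s in (0 : ℝ)..1, min (t : ℝ) s * nemytskii bvpNonlinearity U s
      = (exp (U 0) * ∫ x in (0 : ℝ)..1, exp (w (projIcc 0 1 zero_le_one x))) *
        ∫ s in (0 : ℝ)..1, min (t : ℝ) s *
          (sin (3 * π / 2 * s) * exp (w (projIcc 0 1 zero_le_one s)) /
            ∫ x in (0 : ℝ)..1, exp (w (projIcc 0 1 zero_le_one x))) := by
    rw [← intervalIntegral.integral_const_mul]
    refine intervalIntegral.integral_congr fun s _ => ?_
    simp only [hq]
    field_simp
  rw [sub_const_apply_of_isFixedPt hU, hammerstein, hint]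
  ring

theorem log_two_div_two_lt : log 2 / 2 < 12 * ((1 - log 2 / 2) * (4 / (9 * π ^ 2))) := by
  have hlog : log 2 < 0.6931471808 := log_two_lt_d9
  have hπ : π ^ 2 < 3.15 ^ 2 := pow_lt_pow_left₀ pi_lt_d2 pi_pos.le two_ne_zero
  rw [show 12 * ((1 - log 2 / 2) * (4 / (9 * π ^ 2))) = 48 * (1 - log 2 / 2) / (9 * π ^ 2) by ring,
    lt_div_iff₀ (by positivity)]
  nlinarith [log_pos one_lt_two]

theorem log_two_div_four_le_norm_of_isFixedPt (hU : IsFixedPt (volterra bvpNonlinearity ν) U)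
    (hν : |ν| = 12) : log 2 / 4 ≤ ‖U - .const I (U 0)‖ := by
  by_contra! hw
  have hU_lt : ∀ x, |U x| < log 2 / 2 :=
    fun x => (abs_apply_le_of_isFixedPt hU x).trans_lt (by linarith)
  have hc : 0 < 1 - log 2 / 2 := by linarith [log_two_lt_d9]
  have hq : ∀ s ∈ Icc (2 / 3 : ℝ) 1,
      nemytskii bvpNonlinearity U s ≤ (1 - log 2 / 2) * sin (3 * π / 2 * s) := fun s hs => by
    have hsI : s ∈ I := ⟨by linarith [hs.1], hs.2⟩
    have hUs := abs_lt.1 (hU_lt ⟨s, hsI⟩)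
    have hexp : 1 - log 2 / 2 ≤ exp (U ⟨s, hsI⟩) := by linarith [add_one_le_exp (U ⟨s, hsI⟩)]
    rw [nemytskii_of_mem _ _ hsI]
    simp only [bvpNonlinearity, ContinuousMap.coe_mk,
      min_eq_left (by linarith [log_two_lt_d9] : U ⟨s, hsI⟩ ≤ 1)]
    nlinarith [sin_three_pi_div_two_mul_nonpos hs]
  have hT : tailIntegral (nemytskii bvpNonlinearity U) (2 / 3)
      ≤ -((1 - log 2 / 2) * (4 / (9 * π ^ 2))) := by
    have := tailIntegral_mono (continuous_nemytskii _ U) (by fun_prop) (by norm_num) hq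
    rwa [tailIntegral_const_mul, tailIntegral_two_thirds_sin, mul_neg] at this
  have hU₂₃ : U ⟨2 / 3, by norm_num, by norm_num⟩
      = -ν * tailIntegral (nemytskii bvpNonlinearity U) (2 / 3) :=
    (DFunLike.congr_fun hU.eq _).symm
  have := hU_lt ⟨2 / 3, by norm_num, by norm_num⟩
  rw [hU₂₃, abs_mul, abs_neg, hν,
    abs_of_nonpos (hT.trans (neg_nonpos.2 (mul_pos hc (by positivity)).le))] at this
  linarith [log_two_div_two_lt]

end bvp

end MixedBVP

end

open MixedBVP in
/-- For every 0 < rho < (1/4) ln 2, the Hammerstein integral equation associated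
with the mixed BVP has a positive and a negative eigenvalue with eigenfunctions
of sup-norm rho. -/
theorem mixed_bvp_eigenvalues
    (ρ : ℝ) (hρ : 0 < ρ) (hρ' : ρ < 1/4 * Real.log 2) :
    ∃ lamp lamn : ℝ, 0 < lamp ∧ lamn < 0 ∧
      ∃ up un : C(Set.Icc (0:ℝ) 1, ℝ), ‖up‖ = ρ ∧ ‖un‖ = ρ ∧
        (∀ t : Set.Icc (0:ℝ) 1, up t = lamp *
          ∫ s in (0:ℝ)..1, min (t:ℝ) s *
            (Real.sin (3 * π / 2 * s) * Real.exp (up (Set.projIcc 0 1 zero_le_one s)) /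
              ∫ x in (0:ℝ)..1, Real.exp (up (Set.projIcc 0 1 zero_le_one x)))) ∧
        (∀ t : Set.Icc (0:ℝ) 1, un t = lamn *
          ∫ s in (0:ℝ)..1, min (t:ℝ) s *
            (Real.sin (3 * π / 2 * s) * Real.exp (un (Set.projIcc 0 1 zero_le_one s)) /
              ∫ x in (0:ℝ)..1, Real.exp (un (Set.projIcc 0 1 zero_le_one x)))) := by
  obtain ⟨u, hu_cont, hu⟩ :=
    exists_continuous_isFixedPt_volterra lipschitzWith_bvpNonlinearity abs_bvpNonlinearity_le
  set w : ℝ → C(I, ℝ) := fun ν => u ν - .const I (u ν 0)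
  have hw_cont : Continuous fun ν => ‖w ν‖ := by fun_prop
  have hw₀ : ‖w 0‖ = 0 := by
    have hu₀ : u 0 = 0 := by rw [← hu 0, volterra_zero]
    simp [w, hu₀]
  have hw₁₂ : ∀ ν, |ν| = 12 → ρ ≤ ‖w ν‖ := fun ν hν => by
    linarith [log_two_div_four_le_norm_of_isFixedPt (hu ν) hν]
  have hw_half : ∀ ν, ‖w ν‖ = ρ → ‖w ν‖ ≤ 1 / 2 := fun ν h => by
    linarith [log_two_lt_d9]
  obtain ⟨νp, ⟨hνp, -⟩, hwp⟩ := intermediate_value_Ioc (by norm_num : (0 : ℝ) ≤ 12)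
    hw_cont.continuousOn ⟨by rwa [hw₀], hw₁₂ 12 (by norm_num)⟩
  obtain ⟨νn, ⟨-, hνn⟩, hwn⟩ := intermediate_value_Ico' (by norm_num : (-12 : ℝ) ≤ 0)
    hw_cont.continuousOn ⟨by rwa [hw₀], hw₁₂ (-12) (by norm_num)⟩
  obtain ⟨cp, hcp, hp⟩ := exists_pos_hammerstein_of_isFixedPt (hu νp) (hw_half νp hwp)
  obtain ⟨cn, hcn, hn⟩ := exists_pos_hammerstein_of_isFixedPt (hu νn) (hw_half νn hwn)
  exact ⟨νp * cp, νn * cn, mul_pos hνp hcp, mul_neg_of_neg_of_pos hνn hcn, w νp, w νn, hwp, hwn,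
    hp, hn⟩
end

section
/- Let k(t,s) := min{t,s} on [0,1]², let 0 < ρ < (1/4)·ln 2, set t_ρ := (2/(3π))·arccos(e^{4ρ} − 1) and F_low(t) := e^{−2ρ} ∫₀^{2/3} k(t,s) sin((3π/2)s) ds + e^{2ρ} ∫_{2/3}^{1} k(t,s) sin((3π/2)s) ds. If λ_ρ ∈ ℝ and a continuous u_ρ : [0,1] → ℝ with ‖u_ρ‖_∞ = ρ satisfy u_ρ(t) = λ_ρ ∫₀¹ k(t,s) · sin((3π/2)s) · e^{u_ρ(s)} / (∫₀¹ e^{u_ρ(x)} dx) ds for all t ∈ [0,1], then −ρ/F_low(t_ρ) ≤ λ_ρ ≤ ρ/F_low(t_ρ). -/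
open MeasureTheory Set Real

/-!
Write `w = e^u / ∫₀¹ e^u`. Since `‖u‖ = ρ`, the weight satisfies `e^{-2ρ} ≤ w ≤ e^{2ρ}`, and the
kernel `k(t,s) sin(3πs/2)` is nonnegative for `s ≤ 2/3` and nonpositive for `s ≥ 2/3`, so the
integral `∫₀¹ k(t,s) sin(3πs/2) w(s) ds` is bounded below by `F_low(t)`. Evaluating in closed form,
`F_low(2θ/(3π)) = e^{-2ρ} (sin θ - (e^{4ρ} - 1) θ) / (3π/2)²`, and the choice
`cos θ = e^{4ρ} - 1` makes this `e^{-2ρ} (sin θ - θ cos θ) / (3π/2)² > 0` because `θ < tan θ`.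
Evaluating the integral equation at `t_ρ` then gives `|λ| F_low(t_ρ) ≤ |u(t_ρ)| ≤ ρ`.
-/

theorem integral_sin_const_mul {c : ℝ} (hc : c ≠ 0) (a b : ℝ) :
    ∫ s in a..b, sin (c * s) = (cos (c * a) - cos (c * b)) / c := by
  rw [intervalIntegral.integral_comp_mul_left (fun x => sin x) hc, integral_sin, smul_eq_mul,
    inv_mul_eq_div]

theorem integral_mul_sin_const_mul {c : ℝ} (hc : c ≠ 0) (a b : ℝ) :
    ∫ s in a..b, s * sin (c * s) =
      (sin (c * b) / c ^ 2 - b * cos (c * b) / c) -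
        (sin (c * a) / c ^ 2 - a * cos (c * a) / c) := by
  have hderiv : ∀ x ∈ uIcc a b,
      HasDerivAt (fun y => sin (c * y) / c ^ 2 - y * cos (c * y) / c) (x * sin (c * x)) x := by
    intro x _
    have hlin : HasDerivAt (fun y => c * y) c x := by simpa using (hasDerivAt_id x).const_mul c
    refine ((((hasDerivAt_sin _).comp x hlin).div_const (c ^ 2)).sub
      (((hasDerivAt_id x).mul ((hasDerivAt_cos _).comp x hlin)).div_const c)).congr_deriv ?_
    simp only [Function.comp_apply, id]
    field_simp
    ring
  exact intervalIntegral.integral_eq_sub_of_hasDerivAt hderiv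
    ((by fun_prop : Continuous fun s => s * sin (c * s)).intervalIntegrable a b)

theorem integral_min_mul_of_mem_Icc {f : ℝ → ℝ} (hf : Continuous f) {a b t : ℝ}
    (hat : a ≤ t) (htb : t ≤ b) :
    ∫ s in a..b, min t s * f s = (∫ s in a..t, s * f s) + t * ∫ s in t..b, f s := by
  have hint : ∀ x y, IntervalIntegrable (fun s => min t s * f s) volume x y := fun x y =>
    ((continuous_const.min continuous_id).mul hf).intervalIntegrable x y
  rw [← intervalIntegral.integral_add_adjacent_intervals (hint a t) (hint t b),
    ← intervalIntegral.integral_const_mul]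
  congr 1 <;> refine intervalIntegral.integral_congr fun s hs => ?_
  · rw [uIcc_of_le hat] at hs
    simp only [min_eq_right hs.2]
  · rw [uIcc_of_le htb] at hs
    simp only [min_eq_left hs.1]

theorem integral_min_mul_of_le {f : ℝ → ℝ} {a b t : ℝ} (hab : a ≤ b) (hta : t ≤ a) :
    ∫ s in a..b, min t s * f s = t * ∫ s in a..b, f s := by
  rw [← intervalIntegral.integral_const_mul]
  refine intervalIntegral.integral_congr fun s hs => ?_
  rw [uIcc_of_le hab] at hs
  simp only [min_eq_left (hta.trans hs.1)]

theorem le_integral_mul_of_nonneg_of_nonpos {g w : ℝ → ℝ} (hg : Continuous g) (hw : Continuous w)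
    {a b d m M : ℝ} (hab : a ≤ b) (hbd : b ≤ d)
    (hg_nonneg : ∀ s ∈ Icc a b, 0 ≤ g s) (hg_nonpos : ∀ s ∈ Icc b d, g s ≤ 0)
    (hm : ∀ s ∈ Icc a b, m ≤ w s) (hM : ∀ s ∈ Icc b d, w s ≤ M) :
    m * (∫ s in a..b, g s) + M * ∫ s in b..d, g s ≤ ∫ s in a..d, g s * w s := by
  have hgw : ∀ x y, IntervalIntegrable (fun s => g s * w s) volume x y := fun x y =>
    (hg.mul hw).intervalIntegrable x y
  have hcg : ∀ (k : ℝ) x y, IntervalIntegrable (fun s => k * g s) volume x y := fun k x y =>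
    (continuous_const.mul hg).intervalIntegrable x y
  rw [← intervalIntegral.integral_add_adjacent_intervals (hgw a b) (hgw b d),
    ← intervalIntegral.integral_const_mul, ← intervalIntegral.integral_const_mul]
  gcongr
  · refine intervalIntegral.integral_mono_on hab (hcg m a b) (hgw a b) fun s hs => ?_
    rw [mul_comm m]
    exact mul_le_mul_of_nonneg_left (hm s hs) (hg_nonneg s hs)
  · refine intervalIntegral.integral_mono_on hbd (hcg M b d) (hgw b d) fun s hs => ?_
    rw [mul_comm M]
    exact mul_le_mul_of_nonpos_left (hM s hs) (hg_nonpos s hs)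

theorem exp_neg_le_integral_exp {v : ℝ → ℝ} (hv : Continuous v) {ρ : ℝ}
    (hvρ : ∀ s ∈ Icc (0:ℝ) 1, |v s| ≤ ρ) :
    exp (-ρ) ≤ ∫ x in (0:ℝ)..1, exp (v x) := by
  simpa using intervalIntegral.integral_mono_on (μ := volume) zero_le_one intervalIntegrable_const
    ((continuous_exp.comp hv).intervalIntegrable 0 1)
    fun s hs => exp_le_exp.mpr (abs_le.mp (hvρ s hs)).1

theorem integral_exp_le_exp {v : ℝ → ℝ} (hv : Continuous v) {ρ : ℝ}
    (hvρ : ∀ s ∈ Icc (0:ℝ) 1, |v s| ≤ ρ) :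
    ∫ x in (0:ℝ)..1, exp (v x) ≤ exp ρ := by
  simpa using intervalIntegral.integral_mono_on (μ := volume) zero_le_one
    ((continuous_exp.comp hv).intervalIntegrable 0 1) intervalIntegrable_const
    fun s hs => exp_le_exp.mpr (abs_le.mp (hvρ s hs)).2

theorem exp_div_integral_exp_mem_Icc {v : ℝ → ℝ} (hv : Continuous v) {ρ : ℝ}
    (hvρ : ∀ s ∈ Icc (0:ℝ) 1, |v s| ≤ ρ) {s : ℝ} (hs : s ∈ Icc (0:ℝ) 1) :
    exp (v s) / ∫ x in (0:ℝ)..1, exp (v x) ∈ Icc (exp (-(2 * ρ))) (exp (2 * ρ)) := by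
  have hlow := exp_neg_le_integral_exp hv hvρ
  have hup := integral_exp_le_exp hv hvρ
  obtain ⟨hvs_low, hvs_up⟩ := abs_le.mp (hvρ s hs)
  constructor
  · calc exp (-(2 * ρ)) = exp (-ρ) / exp ρ := by rw [← exp_sub]; ring_nf
      _ ≤ exp (v s) / ∫ x in (0:ℝ)..1, exp (v x) :=
        div_le_div₀ (exp_nonneg _) (exp_le_exp.mpr hvs_low) ((exp_pos _).trans_le hlow) hup
  · calc exp (v s) / ∫ x in (0:ℝ)..1, exp (v x) ≤ exp ρ / exp (-ρ) :=
          div_le_div₀ (exp_nonneg _) (exp_le_exp.mpr hvs_up) (exp_pos _) hlow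
      _ = exp (2 * ρ) := by rw [← exp_sub]; ring_nf

theorem min_mul_sin_nonneg {t s : ℝ} (ht : 0 ≤ t) (hs : s ∈ Icc (0:ℝ) (2/3)) :
    0 ≤ min t s * sin (3 * π / 2 * s) :=
  mul_nonneg (le_min ht hs.1) <|
    sin_nonneg_of_nonneg_of_le_pi (by nlinarith [pi_pos, hs.1]) (by nlinarith [pi_pos, hs.2])

theorem min_mul_sin_nonpos {t s : ℝ} (ht : 0 ≤ t) (hs : s ∈ Icc (2/3:ℝ) 1) :
    min t s * sin (3 * π / 2 * s) ≤ 0 := by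
  have hsin : 0 ≤ sin (3 * π / 2 * s - π) :=
    sin_nonneg_of_nonneg_of_le_pi (by nlinarith [pi_pos, hs.1]) (by nlinarith [pi_pos, hs.2])
  rw [sin_sub_pi] at hsin
  exact mul_nonpos_of_nonneg_of_nonpos (le_min ht (by linarith [hs.1])) (by linarith)

theorem integral_zero_twoThirds_min_mul_sin {t : ℝ} (ht0 : 0 ≤ t) (ht : t ≤ 2/3) :
    ∫ s in (0:ℝ)..(2/3), min t s * sin (3 * π / 2 * s) =
      sin (3 * π / 2 * t) / (3 * π / 2) ^ 2 + t / (3 * π / 2) := by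
  have hc : 3 * π / 2 ≠ 0 := by positivity
  rw [integral_min_mul_of_mem_Icc (by fun_prop) ht0 ht, integral_mul_sin_const_mul hc,
    integral_sin_const_mul hc, show 3 * π / 2 * (2/3 : ℝ) = π by ring, mul_zero, cos_pi, sin_zero]
  field_simp
  ring

theorem integral_twoThirds_one_min_mul_sin {t : ℝ} (ht : t ≤ 2/3) :
    ∫ s in (2/3:ℝ)..1, min t s * sin (3 * π / 2 * s) = -t / (3 * π / 2) := by
  have hc : 3 * π / 2 ≠ 0 := by positivity
  rw [integral_min_mul_of_le (by norm_num) ht, integral_sin_const_mul hc,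
    show 3 * π / 2 * (2/3 : ℝ) = π by ring, show 3 * π / 2 * (1 : ℝ) = π + π / 2 by ring,
    cos_pi, cos_add_pi_div_two, sin_pi]
  ring

noncomputable def fLow (ρ t : ℝ) : ℝ :=
  exp (-(2 * ρ)) * (∫ s in (0:ℝ)..(2/3), min t s * sin (3 * π / 2 * s)) +
    exp (2 * ρ) * ∫ s in (2/3:ℝ)..1, min t s * sin (3 * π / 2 * s)

theorem fLow_le_integral {ρ t : ℝ} (ht0 : 0 ≤ t) {v : ℝ → ℝ} (hv : Continuous v)
    (hvρ : ∀ s ∈ Icc (0:ℝ) 1, |v s| ≤ ρ) :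
    fLow ρ t ≤ ∫ s in (0:ℝ)..1,
      min t s * (sin (3 * π / 2 * s) * exp (v s) / ∫ x in (0:ℝ)..1, exp (v x)) := by
  have hweight := fun s (hs : s ∈ Icc (0:ℝ) 1) => exp_div_integral_exp_mem_Icc hv hvρ hs
  have hsplit : (fun s => min t s * (sin (3 * π / 2 * s) * exp (v s) / ∫ x in (0:ℝ)..1, exp (v x)))
      = fun s => min t s * sin (3 * π / 2 * s) * (exp (v s) / ∫ x in (0:ℝ)..1, exp (v x)) := by
    funext s
    ring
  rw [hsplit]
  exact le_integral_mul_of_nonneg_of_nonpos (by fun_prop) (by fun_prop) (by norm_num)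
    (by norm_num) (fun s hs => min_mul_sin_nonneg ht0 hs) (fun s hs => min_mul_sin_nonpos ht0 hs)
    (fun s hs => (hweight s ⟨hs.1, hs.2.trans (by norm_num)⟩).1)
    (fun s hs => (hweight s ⟨(by norm_num : (0:ℝ) ≤ 2/3).trans hs.1, hs.2⟩).2)

theorem two_div_three_pi_mul_mem_Icc {θ : ℝ} (hθ0 : 0 ≤ θ) (hθπ : θ ≤ π) :
    2 / (3 * π) * θ ∈ Icc (0:ℝ) (2/3) := by
  have hπ := pi_pos
  refine ⟨by positivity, ?_⟩
  rw [div_mul_eq_mul_div, div_le_iff₀ (by positivity)]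
  nlinarith

theorem fLow_eq {ρ θ : ℝ} (hθ0 : 0 ≤ θ) (hθπ : θ ≤ π) :
    fLow ρ (2 / (3 * π) * θ) =
      exp (-(2 * ρ)) * (sin θ - (exp (4 * ρ) - 1) * θ) / (3 * π / 2) ^ 2 := by
  obtain ⟨ht0, ht⟩ := two_div_three_pi_mul_mem_Icc hθ0 hθπ
  have hπ := pi_pos.ne'
  have hexp : exp (2 * ρ) = exp (-(2 * ρ)) * exp (4 * ρ) := by rw [← exp_add]; ring_nf
  rw [fLow, integral_zero_twoThirds_min_mul_sin ht0 ht, integral_twoThirds_one_min_mul_sin ht,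
    show 3 * π / 2 * (2 / (3 * π) * θ) = θ by field_simp, hexp]
  field_simp
  ring

theorem sin_sub_mul_cos_pos {θ : ℝ} (hθ0 : 0 < θ) (hθ : θ < π / 2) : 0 < sin θ - θ * cos θ := by
  have hcos := cos_pos_of_mem_Ioo ⟨by linarith, hθ⟩
  have htan := lt_tan hθ0 hθ
  rw [tan_eq_sin_div_cos, lt_div_iff₀ hcos] at htan
  linarith

theorem exp_four_mul_sub_one_mem_Ioo {ρ : ℝ} (hρ : 0 < ρ) (hρ' : ρ < 1/4 * log 2) :
    exp (4 * ρ) - 1 ∈ Ioo (0:ℝ) 1 := by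
  constructor
  · linarith [one_lt_exp_iff.mpr (by linarith : 0 < 4 * ρ)]
  · have h := exp_lt_exp.mpr (by linarith : 4 * ρ < log 2)
    rw [exp_log two_pos] at h
    linarith

theorem fLow_pos {ρ : ℝ} (hρ : 0 < ρ) (hρ' : ρ < 1/4 * log 2) :
    0 < fLow ρ (2 / (3 * π) * arccos (exp (4 * ρ) - 1)) := by
  obtain ⟨hx0, hx1⟩ := exp_four_mul_sub_one_mem_Ioo hρ hρ'
  have hpos := sin_sub_mul_cos_pos (arccos_pos.mpr hx1) (arccos_lt_pi_div_two.mpr hx0)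
  rw [cos_arccos (by linarith) hx1.le, mul_comm (arccos _)] at hpos
  rw [fLow_eq (arccos_nonneg _) (arccos_le_pi _)]
  exact div_pos (mul_pos (exp_pos _) hpos) (by positivity)

/-- Localization of the eigenvalues for the mixed BVP: if 0 < rho < (1/4) ln 2
and (lam, u) solves the integral equation with sup-norm of u equal to rho, then
-rho / F_low(t_rho) <= lam <= rho / F_low(t_rho). -/
theorem mixed_bvp_eigenvalue_localization
    (ρ : ℝ) (hρ : 0 < ρ) (hρ' : ρ < 1/4 * Real.log 2)
    (Flow : ℝ → ℝ)
    (hFlow : ∀ t : ℝ, Flow t =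
      Real.exp (-(2*ρ)) * (∫ s in (0:ℝ)..(2/3), min t s * Real.sin (3 * π / 2 * s)) +
      Real.exp (2*ρ) * ∫ s in (2/3:ℝ)..1, min t s * Real.sin (3 * π / 2 * s))
    (lam : ℝ) (u : C(Set.Icc (0:ℝ) 1, ℝ)) (hu : ‖u‖ = ρ)
    (heq : ∀ t : Set.Icc (0:ℝ) 1, u t = lam *
      ∫ s in (0:ℝ)..1, min (t:ℝ) s *
            (Real.sin (3 * π / 2 * s) * Real.exp (u (Set.projIcc 0 1 zero_le_one s)) /
              ∫ x in (0:ℝ)..1, Real.exp (u (Set.projIcc 0 1 zero_le_one x)))) :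
    -ρ / Flow (2 / (3 * π) * Real.arccos (Real.exp (4*ρ) - 1)) ≤ lam ∧
    lam ≤ ρ / Flow (2 / (3 * π) * Real.arccos (Real.exp (4*ρ) - 1)) := by
  obtain rfl : Flow = fLow ρ := funext hFlow
  set t := 2 / (3 * π) * arccos (exp (4 * ρ) - 1)
  have hF := fLow_pos hρ hρ'
  obtain ⟨ht0, ht⟩ :=
    two_div_three_pi_mul_mem_Icc (arccos_nonneg (exp (4 * ρ) - 1)) (arccos_le_pi _)
  have hbound : ∀ x, |u x| ≤ ρ := fun x => hu ▸ u.norm_coe_le_norm x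
  have hFI := fLow_le_integral ht0 (v := fun s => u (projIcc 0 1 zero_le_one s))
    (u.continuous.comp continuous_projIcc) fun s _ => hbound _
  have hut := hbound ⟨t, ht0, ht.trans (by norm_num)⟩
  rw [heq, abs_mul] at hut
  have hlam : |lam| ≤ ρ / fLow ρ t := by
    rw [le_div_iff₀ hF]
    calc |lam| * fLow ρ t ≤ |lam| * |_| :=
          mul_le_mul_of_nonneg_left (hFI.trans (le_abs_self _)) (abs_nonneg lam)
      _ ≤ ρ := hut
  rw [neg_div]
  exact abs_le.mp hlam
end

section
/- Let ρ > 0, let k be the Dirichlet Green's function k(t,s) = t(1−s) for t ≤ s and k(t,s) = s(1−t) for s ≤ t, and define F_low(t) := e^{−2ρ} ∫₀^{2/3} k(t,s) sin((3π/2)s) ds + e^{2ρ} ∫_{2/3}^{1} k(t,s) sin((3π/2)s) ds. Then F_low(1) = 0, F_low(2/3) = (4/(27π)) e^{−2ρ} + ((8 − 4π)/(27π²)) e^{2ρ}, and F_low(2/3) > 0 if and only if ρ < (1/4)·ln(π/(π−2)). -/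
open MeasureTheory Set Real

/-!
On `[0, 2/3]` the kernel `k (2/3) s` equals `s / 3`, and on `[2/3, 1]` it equals `2/3 (1 - s)`;
likewise `k 1 s = 0` on all of `[0, 1]`. Each integral is therefore of an affine function against
`sin (3π/2 · s)`, which integrates in closed form. Finally, `A e^{-x} + B e^{x}` with `A > 0 > B`
is positive exactly when `e^{2x} < A / (-B)`, and here `A / (-B) = π / (π - 2)`.
-/

noncomputable def greenDirichlet (t s : ℝ) : ℝ := if t ≤ s then t * (1 - s) else s * (1 - t)

lemma greenDirichlet_of_le {t s : ℝ} (h : s ≤ t) : greenDirichlet t s = s * (1 - t) := by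
  unfold greenDirichlet
  split_ifs with hts
  · rw [le_antisymm hts h]
  · rfl

lemma greenDirichlet_of_ge {t s : ℝ} (h : t ≤ s) : greenDirichlet t s = t * (1 - s) :=
  if_pos h

lemma integral_greenDirichlet_mul_of_le {t a b : ℝ} (hab : a ≤ b) (hbt : b ≤ t)
    (f : ℝ → ℝ) :
    ∫ s in a..b, greenDirichlet t s * f s = ∫ s in a..b, s * (1 - t) * f s := by
  refine intervalIntegral.integral_congr fun s hs => ?_
  rw [uIcc_of_le hab] at hs
  simp only [greenDirichlet_of_le (hs.2.trans hbt)]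

lemma integral_greenDirichlet_mul_of_ge {t a b : ℝ} (hab : a ≤ b) (hta : t ≤ a)
    (f : ℝ → ℝ) :
    ∫ s in a..b, greenDirichlet t s * f s = ∫ s in a..b, t * (1 - s) * f s := by
  refine intervalIntegral.integral_congr fun s hs => ?_
  rw [uIcc_of_le hab] at hs
  simp only [greenDirichlet_of_ge (hta.trans hs.1)]

lemma integral_affine_mul_sin (p q c a b : ℝ) (hc : c ≠ 0) :
    ∫ s in a..b, (p + q * s) * sin (c * s) =
      (q * sin (c * b) / c ^ 2 - (p + q * b) * cos (c * b) / c) -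
      (q * sin (c * a) / c ^ 2 - (p + q * a) * cos (c * a) / c) := by
  have hderiv : ∀ s ∈ uIcc a b, HasDerivAt
      (fun s => q * sin (c * s) / c ^ 2 - (p + q * s) * cos (c * s) / c)
      ((p + q * s) * sin (c * s)) s := by
    intro s _
    have hlin : HasDerivAt (fun s => c * s) c s := by
      simpa using (hasDerivAt_id s).const_mul c
    have hsin := (hasDerivAt_sin (c * s)).comp s hlin
    have hcos := (hasDerivAt_cos (c * s)).comp s hlin
    have haff : HasDerivAt (fun s => p + q * s) q s := by
      simpa using ((hasDerivAt_id s).const_mul q).const_add p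
    refine (((hsin.const_mul q).div_const (c ^ 2)).sub ((haff.mul hcos).div_const c)).congr_deriv ?_
    simp only [Function.comp_apply]
    field_simp
    ring
  refine intervalIntegral.integral_eq_sub_of_hasDerivAt hderiv ?_
  exact (by fun_prop : Continuous fun s => (p + q * s) * sin (c * s)).intervalIntegrable a b

lemma sin_three_pi_div_two : sin (3 * π / 2) = -1 := by
  rw [show 3 * π / 2 = π / 2 + π by ring, sin_add_pi, sin_pi_div_two]

lemma cos_three_pi_div_two : cos (3 * π / 2) = 0 := by
  rw [show 3 * π / 2 = π / 2 + π by ring, cos_add_pi, cos_pi_div_two, neg_zero]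

lemma integral_greenDirichlet_one_mul (a b : ℝ) (hab : a ≤ b) (hb : b ≤ 1) (f : ℝ → ℝ) :
    ∫ s in a..b, greenDirichlet 1 s * f s = 0 := by
  simp [integral_greenDirichlet_mul_of_le hab hb]

lemma integral_greenDirichlet_two_thirds_mul_sin_left :
    ∫ s in (0:ℝ)..(2/3), greenDirichlet (2/3) s * sin (3 * π / 2 * s) = 4 / (27 * π) := by
  rw [integral_greenDirichlet_mul_of_le (by norm_num) le_rfl]
  calc _ = ∫ s in (0:ℝ)..(2/3), (0 + 1/3 * s) * sin (3 * π / 2 * s) := by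
          congr 1; ext s; ring
    _ = 4 / (27 * π) := by
          rw [integral_affine_mul_sin _ _ _ _ _ (by positivity),
            show 3 * π / 2 * (2/3) = π by ring]
          simp only [mul_zero, sin_zero, cos_zero, sin_pi, cos_pi]
          field_simp
          ring

lemma integral_greenDirichlet_two_thirds_mul_sin_right :
    ∫ s in (2/3:ℝ)..1, greenDirichlet (2/3) s * sin (3 * π / 2 * s) =
      (8 - 4 * π) / (27 * π ^ 2) := by
  rw [integral_greenDirichlet_mul_of_ge (by norm_num) le_rfl]
  calc _ = ∫ s in (2/3:ℝ)..1, (2/3 + (-2/3) * s) * sin (3 * π / 2 * s) := by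
          congr 1; ext s; ring
    _ = (8 - 4 * π) / (27 * π ^ 2) := by
          rw [integral_affine_mul_sin _ _ _ _ _ (by positivity),
            show 3 * π / 2 * (2/3) = π by ring, mul_one]
          simp only [sin_pi, cos_pi, sin_three_pi_div_two, cos_three_pi_div_two]
          field_simp
          ring

lemma mul_exp_neg_add_mul_exp_pos_iff {A B x : ℝ} (hA : 0 < A) (hB : B < 0) :
    0 < A * exp (-x) + B * exp x ↔ x < log (A / -B) / 2 := by
  have hx : 0 < exp x := exp_pos x
  have hscale : (A * exp (-x) + B * exp x) * exp x = A + B * exp (2 * x) := by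
    rw [add_mul, mul_assoc, ← exp_add, mul_assoc, ← exp_add, neg_add_cancel, exp_zero]
    ring_nf
  rw [← mul_pos_iff_of_pos_right hx, hscale, lt_div_iff₀ two_pos, mul_comm x,
    lt_log_iff_exp_lt (div_pos hA (neg_pos.mpr hB)), lt_div_iff₀ (neg_pos.mpr hB)]
  constructor <;> intro h <;> linarith

theorem dirichlet_Flow_values_general
    (ρ : ℝ)
    (k : ℝ → ℝ → ℝ)
    (hk : ∀ t s : ℝ, k t s = if t ≤ s then t * (1 - s) else s * (1 - t))
    (Flow : ℝ → ℝ)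
    (hFlow : ∀ t : ℝ, Flow t =
      Real.exp (-(2*ρ)) * (∫ s in (0:ℝ)..(2/3), k t s * Real.sin (3 * π / 2 * s)) +
      Real.exp (2*ρ) * ∫ s in (2/3:ℝ)..1, k t s * Real.sin (3 * π / 2 * s)) :
    Flow 1 = 0 ∧
    Flow (2/3) = 4 / (27 * π) * Real.exp (-(2*ρ)) +
      (8 - 4 * π) / (27 * π ^ 2) * Real.exp (2*ρ) ∧
    (0 < Flow (2/3) ↔ ρ < 1/4 * Real.log (π / (π - 2))) := by
  obtain rfl : k = greenDirichlet := funext₂ hk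
  have hFlow_two_thirds : Flow (2/3) = 4 / (27 * π) * exp (-(2*ρ)) +
      (8 - 4 * π) / (27 * π ^ 2) * exp (2*ρ) := by
    rw [hFlow, integral_greenDirichlet_two_thirds_mul_sin_left,
      integral_greenDirichlet_two_thirds_mul_sin_right]
    ring
  refine ⟨?_, hFlow_two_thirds, ?_⟩
  · rw [hFlow, integral_greenDirichlet_one_mul _ _ (by norm_num) (by norm_num),
      integral_greenDirichlet_one_mul _ _ (by norm_num) le_rfl]
    ring
  have hπ : 2 < π := by linarith [pi_gt_three]
  have hratio : 4 / (27 * π) / -((8 - 4 * π) / (27 * π ^ 2)) = π / (π - 2) := by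
    have : π - 2 ≠ 0 := by linarith
    rw [show 8 - 4 * π = -(4 * (π - 2)) by ring]
    field_simp
  rw [hFlow_two_thirds, mul_exp_neg_add_mul_exp_pos_iff (by positivity)
    (div_neg_of_neg_of_pos (by linarith) (by positivity)), hratio]
  constructor <;> intro h <;> linarith

/-- For the Dirichlet Green's function, F_low(1) = 0,
F_low(2/3) = (4/(27 pi)) exp(-2 rho) + ((8 - 4 pi)/(27 pi^2)) exp(2 rho), and
F_low(2/3) > 0 iff rho < (1/4) ln(pi/(pi - 2)). -/
theorem dirichlet_Flow_values
    (ρ : ℝ) (hρ : 0 < ρ)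
    (k : ℝ → ℝ → ℝ)
    (hk : ∀ t s : ℝ, k t s = if t ≤ s then t * (1 - s) else s * (1 - t))
    (Flow : ℝ → ℝ)
    (hFlow : ∀ t : ℝ, Flow t =
      Real.exp (-(2*ρ)) * (∫ s in (0:ℝ)..(2/3), k t s * Real.sin (3 * π / 2 * s)) +
      Real.exp (2*ρ) * ∫ s in (2/3:ℝ)..1, k t s * Real.sin (3 * π / 2 * s)) :
    Flow 1 = 0 ∧
    Flow (2/3) = 4 / (27 * π) * Real.exp (-(2*ρ)) +
      (8 - 4 * π) / (27 * π ^ 2) * Real.exp (2*ρ) ∧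
    (0 < Flow (2/3) ↔ ρ < 1/4 * Real.log (π / (π - 2))) :=
  dirichlet_Flow_values_general ρ k hk Flow hFlow
end
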